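/- Let C be an n×n real symmetric invertible matrix with eigendecomposition C = Q Λ Qᵀ, where Q is orthogonal and Λ is diagonal, and partition Q = [Q₁ Q₂] with Q₂ consisting of n−m columns. Let Z be an m×n real matrix (m < n) with orthonormal rows (Z Zᵀ = I_m) such that Z Q₂ = 0, i.e. the columns of Q₂ form an orthonormal basis of the nullspace of Z. Then the m×m matrix Z C Zᵀ is invertible and Zᵀ (Z C Zᵀ)⁻¹ Z = Zᵀ Z C⁻¹ Zᵀ Z. -/

import Mathlib

open Matrix

/-- Let `C = Q Λ Qᵀ` be an `n × n` real symmetric invertible matrix with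
`Q = [Q₁ Q₂]` orthogonal and `Λ` diagonal.  If `Z` is an `m × n` matrix (`m < n`) with
orthonormal rows (`Z Zᵀ = I`) such that `Z Q₂ = 0`, then `Z C Zᵀ` is invertible and
`Zᵀ (Z C Zᵀ)⁻¹ Z = Zᵀ Z C⁻¹ Zᵀ Z`. -/
theorem stmt0 (n m : ℕ) (hmn : m < n)
    (Q₁ : Matrix (Fin n) (Fin m) ℝ) (Q₂ : Matrix (Fin n) (Fin (n - m)) ℝ)
    (d : (Fin m ⊕ Fin (n - m)) → ℝ)
    (hQorth : (Matrix.fromCols Q₁ Q₂)ᵀ * Matrix.fromCols Q₁ Q₂ = 1)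
    (C : Matrix (Fin n) (Fin n) ℝ)
    (hC : C = Matrix.fromCols Q₁ Q₂ * Matrix.diagonal d * (Matrix.fromCols Q₁ Q₂)ᵀ)
    (hCsymm : C.IsSymm) (hCinv : IsUnit C.det)
    (Z : Matrix (Fin m) (Fin n) ℝ)
    (hZrows : Z * Zᵀ = 1)
    (hZQ₂ : Z * Q₂ = 0) :
    IsUnit (Z * C * Zᵀ).det ∧
      Zᵀ * (Z * C * Zᵀ)⁻¹ * Z = Zᵀ * Z * C⁻¹ * Zᵀ * Z := by
  -- the equivalence witnessing "squareness" of Q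
  have e : Fin n ≃ Fin m ⊕ Fin (n - m) :=
    (finCongr (Nat.add_sub_cancel' hmn.le).symm).trans finSumFinEquiv.symm
  set Q : Matrix (Fin n) (Fin m ⊕ Fin (n - m)) ℝ := Matrix.fromCols Q₁ Q₂ with hQ
  -- block identities from hQorth
  have hblocks : Matrix.fromBlocks (Q₁ᵀ * Q₁) (Q₁ᵀ * Q₂) (Q₂ᵀ * Q₁) (Q₂ᵀ * Q₂)
      = Matrix.fromBlocks 1 0 0 1 := by
    rw [← fromRows_mul_fromCols, ← transpose_fromCols, hQorth, fromBlocks_one]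
  have h11 : Q₁ᵀ * Q₁ = 1 := by
    have := congrArg Matrix.toBlocks₁₁ hblocks
    rw [Matrix.toBlocks_fromBlocks₁₁, Matrix.toBlocks_fromBlocks₁₁] at this
    exact this
  have h12 : Q₁ᵀ * Q₂ = 0 := by
    have := congrArg Matrix.toBlocks₁₂ hblocks
    rw [Matrix.toBlocks_fromBlocks₁₂, Matrix.toBlocks_fromBlocks₁₂] at this
    exact this
  have h21 : Q₂ᵀ * Q₁ = 0 := by
    have := congrArg Matrix.toBlocks₂₁ hblocks
    rw [Matrix.toBlocks_fromBlocks₂₁, Matrix.toBlocks_fromBlocks₂₁] at this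
    exact this
  have h22 : Q₂ᵀ * Q₂ = 1 := by
    have := congrArg Matrix.toBlocks₂₂ hblocks
    rw [Matrix.toBlocks_fromBlocks₂₂, Matrix.toBlocks_fromBlocks₂₂] at this
    exact this
  -- Q * Qᵀ = 1
  have hQQt : Q₁ * Q₁ᵀ + Q₂ * Q₂ᵀ = 1 := by
    rw [← fromCols_mul_fromRows]
    have := (fromCols_mul_fromRows_eq_one_comm e Q₁ Q₂ Q₁ᵀ Q₂ᵀ).mpr
      (by rw [← transpose_fromCols]; exact hQorth)
    exact this
  -- diagonal blocks
  set D₁ : Matrix (Fin m) (Fin m) ℝ := Matrix.diagonal (fun i => d (Sum.inl i)) with hD₁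
  set D₂ : Matrix (Fin (n - m)) (Fin (n - m)) ℝ :=
    Matrix.diagonal (fun i => d (Sum.inr i)) with hD₂
  have hdsum : Matrix.diagonal d = Matrix.fromBlocks D₁ 0 0 D₂ := by
    rw [hD₁, hD₂, Matrix.fromBlocks_diagonal]
    congr 1
    funext x; cases x <;> rfl
  -- C as a sum of blocks
  have hC' : C = Q₁ * D₁ * Q₁ᵀ + Q₂ * D₂ * Q₂ᵀ := by
    rw [hC, hdsum, transpose_fromCols, fromCols_mul_fromBlocks,
      fromCols_mul_fromRows]
    simp [Matrix.mul_assoc]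
  -- d is nowhere zero
  have hCunit : IsUnit C := (Matrix.isUnit_iff_isUnit_det C).mpr hCinv
  have hCinvC : C⁻¹ * C = 1 := Matrix.nonsing_inv_mul C hCinv
  have hdd : Matrix.diagonal d = Qᵀ * C * Q := by
    rw [hC]
    calc Matrix.diagonal d = 1 * Matrix.diagonal d * 1 := by simp
    _ = (Qᵀ * Q) * Matrix.diagonal d * (Qᵀ * Q) := by rw [hQorth]
    _ = Qᵀ * (Q * Matrix.diagonal d * Qᵀ) * Q := by
        simp only [Matrix.mul_assoc]
  have hQQt' : Q * Qᵀ = 1 := by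
    rw [hQ, transpose_fromCols, fromCols_mul_fromRows]
    exact hQQt
  have hdleft : (Qᵀ * C⁻¹ * Q) * Matrix.diagonal d = 1 := by
    rw [hdd]
    calc (Qᵀ * C⁻¹ * Q) * (Qᵀ * C * Q) = Qᵀ * C⁻¹ * (Q * Qᵀ) * C * Q := by
          simp only [Matrix.mul_assoc]
    _ = Qᵀ * (C⁻¹ * C) * Q := by rw [hQQt']; simp only [Matrix.mul_assoc, Matrix.mul_one]
    _ = Qᵀ * Q := by rw [hCinvC, Matrix.mul_one]
    _ = 1 := hQorth
  have hdunit : ∀ i, d i ≠ 0 := by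
    intro i
    have h := Matrix.isUnit_det_of_left_inverse hdleft
    rw [Matrix.det_diagonal] at h
    have := h.ne_zero
    rw [Finset.prod_ne_zero_iff] at this
    exact this i (Finset.mem_univ i)
  -- A = Z Q₁ is orthogonal
  set A : Matrix (Fin m) (Fin m) ℝ := Z * Q₁ with hA
  have hAAt : A * Aᵀ = 1 := by
    have : Z * (Q₁ * Q₁ᵀ + Q₂ * Q₂ᵀ) * Zᵀ = 1 := by rw [hQQt, Matrix.mul_one, hZrows]
    calc A * Aᵀ = Z * (Q₁ * Q₁ᵀ) * Zᵀ := by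
          rw [hA, Matrix.transpose_mul]; simp only [Matrix.mul_assoc]
    _ = Z * (Q₁ * Q₁ᵀ) * Zᵀ + (Z * Q₂) * (Q₂ᵀ * Zᵀ) := by rw [hZQ₂]; simp
    _ = Z * (Q₁ * Q₁ᵀ + Q₂ * Q₂ᵀ) * Zᵀ := by
          simp only [Matrix.mul_add, Matrix.add_mul, Matrix.mul_assoc]
    _ = 1 := this
  have hAtA : Aᵀ * A = 1 := mul_eq_one_comm.mp hAAt
  -- Z = A Q₁ᵀ
  have hZ : Z = A * Q₁ᵀ := by
    calc Z = Z * (Q₁ * Q₁ᵀ + Q₂ * Q₂ᵀ) := by rw [hQQt, Matrix.mul_one]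
    _ = A * Q₁ᵀ + (Z * Q₂) * Q₂ᵀ := by
          rw [hA, Matrix.mul_add]; simp only [Matrix.mul_assoc]
    _ = A * Q₁ᵀ := by rw [hZQ₂]; simp
  -- Z C Zᵀ = A D₁ Aᵀ
  have hZCZ : Z * C * Zᵀ = A * D₁ * Aᵀ := by
    rw [hC', hZ, Matrix.transpose_mul, Matrix.transpose_transpose]
    have key : Q₁ᵀ * (Q₁ * D₁ * Q₁ᵀ + Q₂ * D₂ * Q₂ᵀ) * Q₁ = D₁ := by
      simp only [Matrix.mul_add, Matrix.add_mul, Matrix.mul_assoc]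
      rw [h21]
      simp only [Matrix.mul_zero, Matrix.zero_mul, add_zero]
      rw [show Q₁ᵀ * (Q₁ * (D₁ * (Q₁ᵀ * Q₁))) = Q₁ᵀ * Q₁ * (D₁ * (Q₁ᵀ * Q₁)) by
        simp only [Matrix.mul_assoc], h11]
      simp
    calc A * Q₁ᵀ * (Q₁ * D₁ * Q₁ᵀ + Q₂ * D₂ * Q₂ᵀ) * (Q₁ * Aᵀ)
        = A * (Q₁ᵀ * (Q₁ * D₁ * Q₁ᵀ + Q₂ * D₂ * Q₂ᵀ) * Q₁) * Aᵀ := by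
          simp only [Matrix.mul_assoc]
    _ = A * D₁ * Aᵀ := by rw [key]
  -- inverses of the diagonal blocks
  set E₁ : Matrix (Fin m) (Fin m) ℝ := Matrix.diagonal (fun i => (d (Sum.inl i))⁻¹) with hE₁
  set E₂ : Matrix (Fin (n - m)) (Fin (n - m)) ℝ :=
    Matrix.diagonal (fun i => (d (Sum.inr i))⁻¹) with hE₂
  have hD₁E₁ : D₁ * E₁ = 1 := by
    rw [hD₁, hE₁, Matrix.diagonal_mul_diagonal]
    rw [show (fun i => d (Sum.inl i) * (d (Sum.inl i))⁻¹) = fun _ => (1:ℝ) from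
      funext fun i => mul_inv_cancel₀ (hdunit _)]
    exact Matrix.diagonal_one
  have hE₁D₁ : E₁ * D₁ = 1 := mul_eq_one_comm.mp hD₁E₁
  have hD₂E₂ : D₂ * E₂ = 1 := by
    rw [hD₂, hE₂, Matrix.diagonal_mul_diagonal]
    rw [show (fun i => d (Sum.inr i) * (d (Sum.inr i))⁻¹) = fun _ => (1:ℝ) from
      funext fun i => mul_inv_cancel₀ (hdunit _)]
    exact Matrix.diagonal_one
  -- right inverse of Z C Zᵀ
  have hright : (Z * C * Zᵀ) * (A * E₁ * Aᵀ) = 1 := by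
    rw [hZCZ]
    calc A * D₁ * Aᵀ * (A * E₁ * Aᵀ) = A * (D₁ * (Aᵀ * A) * E₁) * Aᵀ := by
          simp only [Matrix.mul_assoc]
    _ = A * (D₁ * E₁) * Aᵀ := by rw [hAtA]; simp only [Matrix.mul_one]
    _ = 1 := by rw [hD₁E₁, Matrix.mul_one, hAAt]
  have hZCZdet : IsUnit (Z * C * Zᵀ).det := Matrix.isUnit_det_of_right_inverse hright
  have hZCZinv : (Z * C * Zᵀ)⁻¹ = A * E₁ * Aᵀ := Matrix.inv_eq_right_inv hright
  -- explicit inverse of C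
  have hCrinv : C * (Q₁ * E₁ * Q₁ᵀ + Q₂ * E₂ * Q₂ᵀ) = 1 := by
    rw [hC']
    simp only [Matrix.mul_add, Matrix.add_mul, Matrix.mul_assoc]
    rw [show Q₁ᵀ * (Q₂ * (E₂ * Q₂ᵀ)) = (Q₁ᵀ * Q₂) * (E₂ * Q₂ᵀ) by simp only [Matrix.mul_assoc],
      show Q₂ᵀ * (Q₁ * (E₁ * Q₁ᵀ)) = (Q₂ᵀ * Q₁) * (E₁ * Q₁ᵀ) by simp only [Matrix.mul_assoc],
      show Q₁ᵀ * (Q₁ * (E₁ * Q₁ᵀ)) = (Q₁ᵀ * Q₁) * (E₁ * Q₁ᵀ) by simp only [Matrix.mul_assoc],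
      show Q₂ᵀ * (Q₂ * (E₂ * Q₂ᵀ)) = (Q₂ᵀ * Q₂) * (E₂ * Q₂ᵀ) by simp only [Matrix.mul_assoc],
      h12, h21, h11, h22]
    simp only [Matrix.zero_mul, Matrix.mul_zero, add_zero, zero_add, Matrix.one_mul]
    rw [show D₁ * (E₁ * Q₁ᵀ) = (D₁ * E₁) * Q₁ᵀ by simp only [Matrix.mul_assoc],
      show D₂ * (E₂ * Q₂ᵀ) = (D₂ * E₂) * Q₂ᵀ by simp only [Matrix.mul_assoc],
      hD₁E₁, hD₂E₂]
    simp only [Matrix.one_mul]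
    exact hQQt
  have hCinv' : C⁻¹ = Q₁ * E₁ * Q₁ᵀ + Q₂ * E₂ * Q₂ᵀ := Matrix.inv_eq_right_inv hCrinv
  refine ⟨hZCZdet, ?_⟩
  -- LHS
  have hLHS : Zᵀ * (Z * C * Zᵀ)⁻¹ * Z = Q₁ * E₁ * Q₁ᵀ := by
    rw [hZCZinv, hZ, Matrix.transpose_mul, Matrix.transpose_transpose]
    calc Q₁ * Aᵀ * (A * E₁ * Aᵀ) * (A * Q₁ᵀ)
        = Q₁ * ((Aᵀ * A) * E₁ * (Aᵀ * A)) * Q₁ᵀ := by simp only [Matrix.mul_assoc]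
    _ = Q₁ * E₁ * Q₁ᵀ := by rw [hAtA]; simp only [Matrix.one_mul, Matrix.mul_one,
          Matrix.mul_assoc]
  -- ZᵀZ = Q₁ Q₁ᵀ
  have hZtZ : Zᵀ * Z = Q₁ * Q₁ᵀ := by
    rw [hZ, Matrix.transpose_mul, Matrix.transpose_transpose]
    calc Q₁ * Aᵀ * (A * Q₁ᵀ) = Q₁ * (Aᵀ * A) * Q₁ᵀ := by simp only [Matrix.mul_assoc]
    _ = Q₁ * Q₁ᵀ := by rw [hAtA]; simp only [Matrix.mul_one, Matrix.mul_assoc, Matrix.one_mul]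
  -- RHS
  have hRHS : Zᵀ * Z * C⁻¹ * Zᵀ * Z = Q₁ * E₁ * Q₁ᵀ := by
    rw [Matrix.mul_assoc (Zᵀ * Z * C⁻¹) Zᵀ Z, hZtZ, hCinv']
    simp only [Matrix.mul_add, Matrix.add_mul, Matrix.mul_assoc]
    rw [show Q₁ᵀ * (Q₂ * (E₂ * (Q₂ᵀ * (Q₁ * Q₁ᵀ)))) =
        (Q₁ᵀ * Q₂) * (E₂ * (Q₂ᵀ * (Q₁ * Q₁ᵀ))) by simp only [Matrix.mul_assoc], h12]
    simp only [Matrix.zero_mul, Matrix.mul_zero, add_zero]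
    rw [show Q₁ᵀ * (Q₁ * (E₁ * (Q₁ᵀ * (Q₁ * Q₁ᵀ)))) =
        (Q₁ᵀ * Q₁) * (E₁ * ((Q₁ᵀ * Q₁) * Q₁ᵀ)) by simp only [Matrix.mul_assoc], h11]
    simp only [Matrix.one_mul, Matrix.mul_assoc]
  rw [hLHS, hRHS]
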